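/- arXiv:2503.24080 — 4 statements merged into one kernel-verified Lean document; each statement's English description precedes it below -/
import Mathlib

section
/- With φ_ε and g_ε := g_+ - φ_ε·g_- as above (ε ∈ (0,1]), one has g_ε(t) → g(t) and G_ε(t) → G(t) for every t ∈ ℝ as ε → 0⁺; moreover, if g additionally satisfies limsup_{t→0} g(t)/t ≤ 0, then lim_{t→0} g_ε(t)/t = 0 for each fixed ε > 0. -/
open Filter Topology

/-- Signed positive part of `g`. -/
noncomputable def gplus (g : ℝ → ℝ) (t : ℝ) : ℝ :=
  if 0 ≤ t then max (g t) 0 else -(max (-(g t)) 0)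

/-- Signed negative part of `g`. -/
noncomputable def gminus (g : ℝ → ℝ) (t : ℝ) : ℝ :=
  if 0 ≤ t then max (-(g t)) 0 else -(max (g t) 0)

/-- Primitive `∫₀ᵗ`. -/
noncomputable def primInt (g : ℝ → ℝ) (t : ℝ) : ℝ := ∫ τ in (0 : ℝ)..t, g τ

/-- Cut-off `φ_ε(t) = min(|t|/ε, 1)`. -/
noncomputable def phiEps (ε t : ℝ) : ℝ := min (|t| / ε) 1

/-- Perturbed nonlinearity `g_ε = g_+ - φ_ε·g_-`. -/
noncomputable def gEps (g : ℝ → ℝ) (ε t : ℝ) : ℝ := gplus g t - phiEps ε t * gminus g t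

lemma gplus_sub_gminus (g : ℝ → ℝ) (t : ℝ) : gplus g t - gminus g t = g t := by
  unfold gplus gminus
  split <;> rcases le_total 0 (g t) with h | h
  · rw [max_eq_left h, max_eq_right (neg_nonpos.2 h)]; ring
  · rw [max_eq_right h, max_eq_left (neg_nonneg.2 h)]; ring
  · rw [max_eq_left h, max_eq_right (neg_nonpos.2 h)]; ring
  · rw [max_eq_right h, max_eq_left (neg_nonneg.2 h)]; ring

lemma gplus_eq_if (g : ℝ → ℝ) (t : ℝ) :
    gplus g t = if (0:ℝ) ≤ t then max (g t) 0 else min (g t) 0 := by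
  unfold gplus
  rcases le_total (g t) 0 with h | h
  · rw [max_eq_left (neg_nonneg.2 h), min_eq_left h]; ring_nf
  · rw [max_eq_right (neg_nonpos.2 h), min_eq_right h]; ring_nf

lemma gminus_eq_if (g : ℝ → ℝ) (t : ℝ) :
    gminus g t = if (0:ℝ) ≤ t then max (-(g t)) 0 else min (-(g t)) 0 := by
  unfold gminus
  rcases le_total (g t) 0 with h | h
  · rw [max_eq_right h, min_eq_right (neg_nonneg.2 h)]; ring_nf
  · rw [max_eq_left h, min_eq_left (neg_nonpos.2 h)]

lemma continuous_gplus {g : ℝ → ℝ} (hg : Continuous g) (h0 : g 0 = 0) :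
    Continuous (gplus g) := by
  have : gplus g = fun t => if (0:ℝ) ≤ t then max (g t) 0 else min (g t) 0 :=
    funext (gplus_eq_if g)
  rw [this]
  apply Continuous.if_le (hg.max continuous_const) (hg.min continuous_const)
    continuous_const continuous_id
  intro x hx
  have hx0 : x = 0 := hx.symm
  subst hx0; simp [h0]

lemma continuous_gminus {g : ℝ → ℝ} (hg : Continuous g) (h0 : g 0 = 0) :
    Continuous (gminus g) := by
  have : gminus g = fun t => if (0:ℝ) ≤ t then max (-(g t)) 0 else min (-(g t)) 0 :=
    funext (gminus_eq_if g)
  rw [this]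
  apply Continuous.if_le (hg.neg.max continuous_const) (hg.neg.min continuous_const)
    continuous_const continuous_id
  intro x hx
  have hx0 : x = 0 := hx.symm
  subst hx0; simp [h0]

lemma continuous_phiEps (ε : ℝ) : Continuous (phiEps ε) :=
  (continuous_abs.div_const ε).min continuous_const

lemma continuous_gEps {g : ℝ → ℝ} (hg : Continuous g) (h0 : g 0 = 0) (ε : ℝ) :
    Continuous (gEps g ε) :=
  (continuous_gplus hg h0).sub ((continuous_phiEps ε).mul (continuous_gminus hg h0))

lemma phi_nonneg {ε : ℝ} (hε : 0 < ε) (t : ℝ) : 0 ≤ phiEps ε t :=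
  le_min (div_nonneg (abs_nonneg _) hε.le) zero_le_one

lemma phi_le_one (ε t : ℝ) : phiEps ε t ≤ 1 := min_le_right _ _

lemma gplus_div {g : ℝ → ℝ} {t : ℝ} (ht : t ≠ 0) : gplus g t / t = max (g t / t) 0 := by
  rcases ht.lt_or_gt with h | h <;> rcases le_total (g t) 0 with h' | h'
  · rw [gplus_eq_if, if_neg (not_le.2 h), min_eq_left h',
      max_eq_left (div_nonneg_of_nonpos h' h.le)]
  · rw [gplus_eq_if, if_neg (not_le.2 h), min_eq_right h',
      max_eq_right (div_nonpos_of_nonneg_of_nonpos h' h.le), zero_div]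
  · rw [gplus_eq_if, if_pos h.le, max_eq_right h',
      max_eq_right (div_nonpos_of_nonpos_of_nonneg h' h.le), zero_div]
  · rw [gplus_eq_if, if_pos h.le, max_eq_left h', max_eq_left (div_nonneg h' h.le)]

lemma gminus_div {g : ℝ → ℝ} {t : ℝ} (ht : t ≠ 0) :
    gminus g t / t = max (-(g t) / t) 0 := by
  have : gminus g t = gplus (fun s => -(g s)) t := by
    rw [gminus_eq_if, gplus_eq_if]
  rw [this, gplus_div ht]

/-- Pointwise convergence `g_ε(t) → g(t)` and `G_ε(t) → G(t)` as `ε → 0⁺`;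
moreover, if `limsup_{t→0} g(t)/t ≤ 0`, then `lim_{t→0} g_ε(t)/t = 0` for each
fixed `ε > 0`. -/
theorem stmt_6 (g : ℝ → ℝ) (hg : Continuous g) (h0 : g 0 = 0) :
    (∀ t : ℝ, Tendsto (fun ε => gEps g ε t) (nhdsWithin 0 (Set.Ioi 0)) (nhds (g t))) ∧
    (∀ t : ℝ, Tendsto (fun ε => primInt (gEps g ε) t) (nhdsWithin 0 (Set.Ioi 0))
        (nhds (primInt g t))) ∧
    ((∀ δ > (0 : ℝ), ∀ᶠ t in nhdsWithin (0 : ℝ) {0}ᶜ, g t / t ≤ δ) →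
      ∀ ε > (0 : ℝ),
        Tendsto (fun t => gEps g ε t / t) (nhdsWithin (0 : ℝ) {0}ᶜ) (nhds 0)) := by
  have h1 : ∀ t : ℝ, Tendsto (fun ε => gEps g ε t) (nhdsWithin 0 (Set.Ioi 0)) (nhds (g t)) := by
    intro t
    by_cases ht : t = 0
    · subst ht
      have : (fun ε => gEps g ε 0) = fun _ => g 0 := by
        funext ε
        simp [gEps, gplus, gminus, phiEps, h0]
      rw [this]
      exact tendsto_const_nhds
    · apply (tendsto_const_nhds : Tendsto (fun _ : ℝ => g t) _ _).congr'
      have habs : (0:ℝ) < |t| := abs_pos.2 ht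
      filter_upwards [Ioo_mem_nhdsGT_of_mem (Set.mem_Ico.2 ⟨le_refl 0, habs⟩)] with ε hε
      have hphi : phiEps ε t = 1 := by
        unfold phiEps
        rw [min_eq_right]
        rw [le_div_iff₀ hε.1, one_mul]
        exact hε.2.le
      rw [gEps, hphi, one_mul, gplus_sub_gminus]
  refine ⟨h1, ?_, ?_⟩
  · intro t
    unfold primInt
    apply intervalIntegral.tendsto_integral_filter_of_dominated_convergence
      (bound := fun x => |gplus g x| + |gminus g x|)
    · exact Eventually.of_forall fun ε =>
        (continuous_gEps hg h0 ε).aestronglyMeasurable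
    · filter_upwards [self_mem_nhdsWithin] with ε (hε : ε ∈ Set.Ioi (0:ℝ))
      refine MeasureTheory.ae_of_all _ fun x _ => ?_
      have hphi0 := phi_nonneg hε x
      have hphi1 := phi_le_one ε x
      calc ‖gEps g ε x‖ = |gplus g x - phiEps ε x * gminus g x| := rfl
        _ ≤ |gplus g x| + |phiEps ε x * gminus g x| := abs_sub _ _
        _ ≤ |gplus g x| + |gminus g x| := by
            rw [abs_mul]
            have : |phiEps ε x| ≤ 1 := by rw [abs_of_nonneg hphi0]; exact hphi1
            nlinarith [abs_nonneg (gminus g x)]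
    · exact (((continuous_gplus hg h0).abs).add
        ((continuous_gminus hg h0).abs)).intervalIntegrable _ _
    · exact MeasureTheory.ae_of_all _ fun x _ => h1 x
  · intro h ε hε
    have hA : Tendsto (fun t => max (g t / t) 0) (nhdsWithin (0:ℝ) {0}ᶜ) (nhds 0) := by
      rw [tendsto_order]
      constructor
      · intro a ha
        exact Eventually.of_forall fun t => lt_of_lt_of_le ha (le_max_right _ _)
      · intro a ha
        filter_upwards [h (a/2) (half_pos ha)] with t ht
        exact max_lt (lt_of_le_of_lt ht (half_lt_self ha)) ha
    have hB : Tendsto (fun t => -(|g t| / ε)) (nhdsWithin (0:ℝ) {0}ᶜ) (nhds 0) := by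
      have : Continuous fun t => -(|g t| / ε) := (hg.abs.div_const ε).neg
      have := this.tendsto 0
      simp only [h0, abs_zero, zero_div, neg_zero] at this
      exact this.mono_left nhdsWithin_le_nhds
    apply tendsto_of_tendsto_of_tendsto_of_le_of_le' hB hA
    · filter_upwards [self_mem_nhdsWithin] with t (ht : t ∈ ({0}ᶜ : Set ℝ))
      have ht0 : t ≠ 0 := ht
      have hre : gEps g ε t / t = max (g t / t) 0 - phiEps ε t * max (-(g t) / t) 0 := by
        rw [gEps, sub_div, mul_div_assoc, gplus_div ht0, gminus_div ht0]
      rw [hre]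
      have h1' : phiEps ε t ≤ |t| / ε := min_le_left _ _
      have h2' : max (-(g t) / t) 0 ≤ |g t| / |t| := by
        apply max_le
        · rw [← abs_div]
          calc -(g t) / t ≤ |(-(g t)) / t| := le_abs_self _
            _ = |g t / t| := by rw [neg_div, abs_neg]
        · positivity
      have hprod : phiEps ε t * max (-(g t) / t) 0 ≤ |g t| / ε := by
        calc phiEps ε t * max (-(g t) / t) 0 ≤ (|t| / ε) * (|g t| / |t|) :=
              mul_le_mul h1' h2' (le_max_right _ _) (div_nonneg (abs_nonneg _) hε.le)
          _ = |g t| / ε := by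
              rw [div_mul_div_comm, mul_comm, mul_div_mul_right _ _ (abs_ne_zero.2 ht0)]
      have hmax0 : (0:ℝ) ≤ max (g t / t) 0 := le_max_right _ _
      linarith
    · filter_upwards [self_mem_nhdsWithin] with t (ht : t ∈ ({0}ᶜ : Set ℝ))
      have ht0 : t ≠ 0 := ht
      have hre : gEps g ε t / t = max (g t / t) 0 - phiEps ε t * max (-(g t) / t) 0 := by
        rw [gEps, sub_div, mul_div_assoc, gplus_div ht0, gminus_div ht0]
      rw [hre]
      have : 0 ≤ phiEps ε t * max (-(g t) / t) 0 :=
        mul_nonneg (phi_nonneg hε t) (le_max_right _ _)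
      linarith
end

section
/- Let g(t) = α·t·log(t²) + β·|t|^{q-1}t with α > 0, β < 0, and q > 1. Then max_{t∈ℝ} G(t) ≤ 0 if and only if β ≤ -(α(q+1)/(q-1))·e^{-(q+1)/2}, where G(t) = ∫₀ᵗ g(τ)dτ = (α/2)·t²·log(t²) - (α/2)·t² + (β/(q+1))·|t|^{q+1} (extended by G(0)=0); equivalently, max G > 0 if and only if β > -(α(q+1)/(q-1))·e^{-(q+1)/2}. -/
/-- Primitive of `g(t) = α·t·log(t²) + β·|t|^{q-1}t`:
`G(t) = (α/2)t²log(t²) - (α/2)t² + (β/(q+1))|t|^{q+1}` (with `log 0 = 0`). -/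
noncomputable def logPowG (α β q t : ℝ) : ℝ :=
  α / 2 * t ^ 2 * Real.log (t ^ 2) - α / 2 * t ^ 2 + β / (q + 1) * |t| ^ (q + 1)

lemma logPowG_abs (α β q t : ℝ) : logPowG α β q t = logPowG α β q |t| := by
  simp [logPowG, sq_abs, abs_abs]

lemma logPowG_eq (α β q t : ℝ) (ht : 0 < t) :
    logPowG α β q t = t ^ 2 * (α * Real.log t - α / 2 + β / (q + 1) * t ^ (q - 1)) := by
  have h1 : Real.log (t ^ 2) = 2 * Real.log t := by
    rw [Real.log_pow]; push_cast; ring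
  have h2 : t ^ (q + 1) = t ^ (2 : ℝ) * t ^ (q - 1) := by
    rw [← Real.rpow_add ht]; congr 1; ring
  have h3 : t ^ (2 : ℝ) = t ^ (2 : ℕ) := by
    rw [← Real.rpow_natCast t 2]; norm_num
  rw [logPowG, abs_of_pos ht, h1, h2, h3]; ring

lemma lemA (α β q : ℝ) (hα : 0 < α) (hq : 1 < q)
    (hβ : β ≤ -(α * (q + 1) / (q - 1)) * Real.exp (-(q + 1) / 2)) (t : ℝ) :
    logPowG α β q t ≤ 0 := by
  have hq1 : (0:ℝ) < q - 1 := by linarith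
  have hq2 : (0:ℝ) < q + 1 := by linarith
  rcases eq_or_ne t 0 with rfl | ht
  · simp [logPowG, Real.zero_rpow hq2.ne']
  rw [logPowG_abs]
  have hs : 0 < |t| := abs_pos.mpr ht
  set s := |t| with hsdef
  rw [logPowG_eq α β q s hs]
  set L := Real.log s with hL
  set u := s ^ (q - 1) with hu
  have hupos : 0 < u := Real.rpow_pos_of_pos hs _
  set E := Real.exp (-(q + 1) / 2) with hE
  have hEpos : 0 < E := Real.exp_pos _
  have hlogu : Real.log u = (q - 1) * L := Real.log_rpow hs _
  have key : (q - 1) * L ≤ E * u + (q - 1) / 2 := by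
    have h5 := Real.log_le_sub_one_of_pos (mul_pos hupos hEpos)
    rw [Real.log_mul hupos.ne' hEpos.ne', hlogu, hE, Real.log_exp] at h5
    linarith
  have hb3 : β / (q + 1) ≤ -(α / (q - 1)) * E := by
    rw [div_le_iff₀ hq2]
    have : -(α / (q - 1)) * E * (q + 1) = -(α * (q + 1) / (q - 1)) * E := by ring
    rw [this]; exact hβ
  have h1 : β / (q + 1) * u ≤ -(α / (q - 1)) * E * u :=
    mul_le_mul_of_nonneg_right hb3 hupos.le
  have h3 : α * L = α / (q - 1) * ((q - 1) * L) := by field_simp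
  have h4 : α / (q - 1) * ((q - 1) * L) ≤ α / (q - 1) * (E * u + (q - 1) / 2) :=
    mul_le_mul_of_nonneg_left key (by positivity)
  have h5 : α / (q - 1) * (E * u + (q - 1) / 2) = α / (q - 1) * E * u + α / 2 := by
    field_simp
  have inner : α * L - α / 2 + β / (q + 1) * u ≤ 0 := by
    rw [h5] at h4
    nlinarith [h1, h4, h3]
  calc s ^ 2 * (α * L - α / 2 + β / (q + 1) * u) ≤ s ^ 2 * 0 :=
        mul_le_mul_of_nonneg_left inner (sq_nonneg s)
    _ = 0 := by ring

lemma lemB (α β q : ℝ) (hα : 0 < α) (hq : 1 < q)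
    (hβ : -(α * (q + 1) / (q - 1)) * Real.exp (-(q + 1) / 2) < β) :
    ∃ t : ℝ, 0 < logPowG α β q t := by
  have hq1 : (0:ℝ) < q - 1 := by linarith
  have hq2 : (0:ℝ) < q + 1 := by linarith
  refine ⟨Real.exp ((q + 1) / (2 * (q - 1))), ?_⟩
  set t := Real.exp ((q + 1) / (2 * (q - 1))) with hT
  have ht : 0 < t := Real.exp_pos _
  rw [logPowG_eq α β q t ht]
  have hL : Real.log t = (q + 1) / (2 * (q - 1)) := Real.log_exp _
  have hu : t ^ (q - 1) = Real.exp ((q + 1) / 2) := by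
    rw [Real.rpow_def_of_pos ht, hL]
    congr 1
    field_simp
  have hEmul : Real.exp (-(q + 1) / 2) * Real.exp ((q + 1) / 2) = 1 := by
    rw [← Real.exp_add]
    have : -(q + 1) / 2 + (q + 1) / 2 = 0 := by ring
    rw [this, Real.exp_zero]
  have h8 : -(α * (q + 1) / (q - 1)) < β * Real.exp ((q + 1) / 2) := by
    have h := mul_lt_mul_of_pos_right hβ (Real.exp_pos ((q + 1) / 2))
    rw [mul_assoc, hEmul, mul_one] at h
    exact h
  have h9 : -(α / (q - 1)) < β / (q + 1) * Real.exp ((q + 1) / 2) := by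
    rw [div_mul_eq_mul_div, lt_div_iff₀ hq2]
    have : -(α / (q - 1)) * (q + 1) = -(α * (q + 1) / (q - 1)) := by ring
    rw [this]; exact h8
  have h10 : α * ((q + 1) / (2 * (q - 1))) - α / 2 = α / (q - 1) := by
    field_simp; ring
  apply mul_pos (by positivity)
  rw [hL, hu]
  linarith [h9, h10]

/-- Threshold for the sign of `max G`: with `α > 0`, `β < 0`, `q > 1`,
`max G ≤ 0` iff `β ≤ -(α(q+1)/(q-1))·e^{-(q+1)/2}`, and equivalently
`max G > 0` iff `β > -(α(q+1)/(q-1))·e^{-(q+1)/2}`. -/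
theorem stmt_9 (α β q : ℝ) (hα : 0 < α) (hβ : β < 0) (hq : 1 < q) :
    ((∀ t : ℝ, logPowG α β q t ≤ 0) ↔
        β ≤ -(α * (q + 1) / (q - 1)) * Real.exp (-(q + 1) / 2)) ∧
    ((∃ t : ℝ, 0 < logPowG α β q t) ↔
        -(α * (q + 1) / (q - 1)) * Real.exp (-(q + 1) / 2) < β) := by
  constructor
  · constructor
    · intro h
      by_contra hc
      push_neg at hc
      obtain ⟨t, ht⟩ := lemB α β q hα hq hc
      exact absurd (h t) (not_le.mpr ht)
    · intro hb t
      exact lemA α β q hα hq hb t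
  · constructor
    · rintro ⟨t, ht⟩
      by_contra hc
      push_neg at hc
      exact absurd ht (not_lt.mpr (lemA α β q hα hq hc t))
    · exact lemB α β q hα hq
end

section
/- Let g(t) = -γ|t|^{r-1}t + β|t|^{q-1}t with γ, β > 0 and 0 < r < q < 1. Then the supremum μ̄₀ := sup_{t≠0} G(t)/(t²/2), with G(t) = -(γ/(r+1))|t|^{r+1} + (β/(q+1))|t|^{q+1}, equals 2(q-r)·((1+r)(1-q)/γ)^{(1-q)/(q-r)}·(β/((1-r)(1+q)))^{(1-r)/(q-r)}, and in particular is finite and positive. -/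
/-- Primitive of the double-power sublinear nonlinearity
`g(t) = -γ|t|^{r-1}t + β|t|^{q-1}t`:
`G(t) = -(γ/(r+1))|t|^{r+1} + (β/(q+1))|t|^{q+1}`. -/
noncomputable def dblPowG (γ β r q t : ℝ) : ℝ :=
  -(γ / (r + 1)) * |t| ^ (r + 1) + β / (q + 1) * |t| ^ (q + 1)

/-- With `γ, β > 0` and `0 < r < q < 1`, the frequency threshold
`μ̄₀ = sup_{t≠0} G(t)/(t²/2)` equals
`2(q-r)·((1+r)(1-q)/γ)^{(1-q)/(q-r)}·(β/((1-r)(1+q)))^{(1-r)/(q-r)}`,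
and in particular is finite and positive. -/
theorem stmt_10 (γ β r q : ℝ) (hγ : 0 < γ) (hβ : 0 < β)
    (hr : 0 < r) (hrq : r < q) (hq : q < 1) :
    sSup {x : ℝ | ∃ t : ℝ, t ≠ 0 ∧ x = dblPowG γ β r q t / (t ^ 2 / 2)} =
      2 * (q - r) * ((1 + r) * (1 - q) / γ) ^ ((1 - q) / (q - r)) *
        (β / ((1 - r) * (1 + q))) ^ ((1 - r) / (q - r)) ∧
    0 < 2 * (q - r) * ((1 + r) * (1 - q) / γ) ^ ((1 - q) / (q - r)) *
        (β / ((1 - r) * (1 + q))) ^ ((1 - r) / (q - r)) := by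
  have h1r : (0:ℝ) < 1 - r := by linarith
  have h1q : (0:ℝ) < 1 - q := by linarith
  have hqr : (0:ℝ) < q - r := by linarith
  have hrp1 : (0:ℝ) < r + 1 := by linarith
  have hqp1 : (0:ℝ) < q + 1 := by linarith
  set θ : ℝ := (1 - q) / (1 - r) with hθdef
  have hθ0 : 0 < θ := div_pos h1q h1r
  have hθ1 : θ < 1 := (div_lt_one h1r).mpr (by linarith)
  have h1θ : 0 < 1 - θ := by linarith
  set a : ℝ := 2 * γ / (r + 1) with hadef
  set b : ℝ := 2 * β / (q + 1) with hbdef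
  have ha : 0 < a := div_pos (by linarith) hrp1
  have hb : 0 < b := div_pos (by linarith) hqp1
  set A : ℝ := (1 + r) * (1 - q) / γ with hAdef
  set B : ℝ := β / ((1 - r) * (1 + q)) with hBdef
  have hA : 0 < A := div_pos (mul_pos (by linarith) h1q) hγ
  have hB : 0 < B := div_pos hβ (mul_pos h1r (by linarith))
  set K : ℝ := A * B with hKdef
  have hK : 0 < K := mul_pos hA hB
  set c : ℝ := K ^ ((1:ℝ) / (1 - θ)) with hcdef
  have hc : 0 < c := Real.rpow_pos_of_pos hK _
  have hne : γ ≠ 0 ∧ (1-r:ℝ) ≠ 0 ∧ (1+q:ℝ) ≠ 0 ∧ (r+1:ℝ) ≠ 0 ∧ (q+1:ℝ) ≠ 0 ∧ (1-q:ℝ) ≠ 0 ∧ (1+r:ℝ) ≠ 0 ∧ (q-r:ℝ) ≠ 0 :=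
    ⟨hγ.ne', h1r.ne', ne_of_gt (by linarith), hrp1.ne', hqp1.ne', h1q.ne', ne_of_gt (by linarith), hqr.ne'⟩
  obtain ⟨hg0, hr0, hq0, hr1, hq1, h1q0, h1r0, hqr0⟩ := hne
  have haK : a * K = b * θ := by
    rw [hKdef, hAdef, hBdef, hbdef, hθdef, hadef]
    field_simp
    ring
  have hcθ1 : c ^ (θ - 1) = K⁻¹ := by
    rw [hcdef, ← Real.rpow_mul hK.le]
    rw [show (1:ℝ)/(1-θ) * (θ-1) = -1 by field_simp; ring]
    rw [Real.rpow_neg_one]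
  have hkey : b * θ * c ^ (θ - 1) = a := by
    rw [hcθ1, ← haK]
    exact mul_inv_cancel_right₀ hK.ne' a
  have hcc : c ^ θ / c = c ^ (θ - 1) := by
    rw [Real.rpow_sub hc, Real.rpow_one]
  set V : ℝ := b * (1 - θ) * c ^ θ with hVdef
  have hV : 0 < V := mul_pos (mul_pos hb h1θ) (Real.rpow_pos_of_pos hc _)
  -- upper bound in terms of x = s^(r-1)
  have hub : ∀ x : ℝ, 0 < x → b * x ^ θ ≤ a * x + V := by
    intro x hx
    have h := Real.geom_mean_le_arith_mean2_weighted hθ0.le h1θ.le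
      (div_nonneg hx.le hc.le) zero_le_one (by ring)
    rw [Real.one_rpow, mul_one, Real.div_rpow hx.le hc.le] at h
    have hcθ : 0 < c ^ θ := Real.rpow_pos_of_pos hc _
    have h2 := mul_le_mul_of_nonneg_left h (le_of_lt (mul_pos hb hcθ))
    calc b * x ^ θ = b * c ^ θ * (x ^ θ / c ^ θ) := by
          field_simp
      _ ≤ b * c ^ θ * (θ * (x / c) + (1 - θ) * 1) := h2
      _ = b * θ * (c ^ θ / c) * x + V := by rw [hVdef]; ring
      _ = a * x + V := by rw [hcc, hkey]
  -- value of the quotient for positive s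
  have hexp : (r - 1) * θ = q - 1 := by
    rw [hθdef]; field_simp; ring
  have hval : ∀ s : ℝ, 0 < s →
      dblPowG γ β r q s / (s ^ 2 / 2) = -(a * s ^ (r - 1)) + b * s ^ (q - 1) := by
    intro s hs
    have habs : |s| = s := abs_of_pos hs
    have hs2 : s ^ (2:ℕ) = s ^ ((2:ℝ)) := by
      rw [show ((2:ℝ)) = ((2:ℕ):ℝ) by norm_num, Real.rpow_natCast]
    have h1 : s ^ (r - 1) = s ^ (r + 1) / s ^ 2 := by
      rw [hs2, ← Real.rpow_sub hs]; congr 1; ring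
    have h2 : s ^ (q - 1) = s ^ (q + 1) / s ^ 2 := by
      rw [hs2, ← Real.rpow_sub hs]; congr 1; ring
    rw [dblPowG, habs, h1, h2, hadef, hbdef]
    have hs2' : (s:ℝ) ^ (2:ℕ) ≠ 0 := pow_ne_zero _ hs.ne'
    field_simp
  -- the set
  set S : Set ℝ := {x : ℝ | ∃ t : ℝ, t ≠ 0 ∧ x = dblPowG γ β r q t / (t ^ 2 / 2)} with hSdef
  have hgreat : IsGreatest S V := by
    constructor
    · -- V is attained at s₀ = c^(1/(r-1))
      refine ⟨c ^ ((1:ℝ) / (r - 1)), ?_, ?_⟩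
      · exact (Real.rpow_pos_of_pos hc _).ne'
      · set s₀ : ℝ := c ^ ((1:ℝ) / (r - 1)) with hs₀def
        have hs₀ : 0 < s₀ := Real.rpow_pos_of_pos hc _
        have hsr : s₀ ^ (r - 1) = c := by
          rw [hs₀def, ← Real.rpow_mul hc.le]
          rw [show (1:ℝ)/(r-1) * (r-1) = 1 from one_div_mul_cancel (by linarith : r - 1 ≠ 0), Real.rpow_one]
        have hsq : s₀ ^ (q - 1) = c ^ θ := by
          rw [← hexp, Real.rpow_mul hs₀.le, hsr]
        rw [hval s₀ hs₀, hsr, hsq]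
        have hac : a * c = b * θ * c ^ θ := by
          rw [← hkey, ← hcc]; field_simp
        rw [hVdef, hac]; ring
    · rintro x ⟨t, ht, rfl⟩
      have hs : 0 < |t| := abs_pos.mpr ht
      have hGt : dblPowG γ β r q t = dblPowG γ β r q |t| := by
        rw [dblPowG, dblPowG, abs_abs]
      have ht2 : t ^ 2 = |t| ^ 2 := (sq_abs t).symm
      rw [hGt, ht2, hval _ hs]
      have hx : 0 < |t| ^ (r - 1) := Real.rpow_pos_of_pos hs _
      have hxq : |t| ^ (q - 1) = (|t| ^ (r - 1)) ^ θ := by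
        rw [← Real.rpow_mul hs.le, hexp]
      rw [hxq]
      have := hub _ hx
      linarith
  -- identify V with the stated closed form
  have hMV : 2 * (q - r) * A ^ ((1 - q) / (q - r)) * B ^ ((1 - r) / (q - r)) = V := by
    have he2 : (1 - r) / (q - r) = (1 - q) / (q - r) + 1 := by field_simp; ring
    have hBe : B ^ ((1 - r) / (q - r)) = B ^ ((1 - q) / (q - r)) * B := by
      rw [he2, Real.rpow_add hB, Real.rpow_one]
    have hcθ : c ^ θ = K ^ ((1 - q) / (q - r)) := by
      rw [hcdef, ← Real.rpow_mul hK.le]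
      congr 1
      rw [hθdef]
      rw [show (1:ℝ) - (1 - q)/(1 - r) = (q - r)/(1 - r) by field_simp; ring]
      field_simp
    have hKe : K ^ ((1 - q) / (q - r)) = A ^ ((1 - q) / (q - r)) * B ^ ((1 - q) / (q - r)) :=
      Real.mul_rpow hA.le hB.le
    have hb1θ : b * (1 - θ) = 2 * (q - r) * B := by
      rw [hbdef, hθdef, hBdef]
      field_simp
      ring
    rw [hVdef, hb1θ, hcθ, hKe, hBe]
    ring
  refine ⟨hgreat.csSup_eq.trans hMV.symm, ?_⟩
  rw [hMV]; exact hV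
end

section
/- If u_i : ℝ^{N_i} → ℝ solves -Δu + μ_i·u = u·log(u²) in ℝ^{N_i} for i = 1, 2 (in the classical/smooth sense), then the tensor product w(x₁,x₂) := u₁(x₁)·u₂(x₂) solves -Δw + (μ₁+μ₂)·w = w·log(w²) in ℝ^{N₁} × ℝ^{N₂}. -/
/-- Second directional derivative. -/
noncomputable def secondDeriv {E : Type*} [NormedAddCommGroup E] [NormedSpace ℝ E]
    (f : E → ℝ) (x v : E) : ℝ :=
  fderiv ℝ (fun y => fderiv ℝ f y v) x v

/-- Pointwise Laplacian on `ℝ^N`. -/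
noncomputable def lapE {N : ℕ} (f : EuclideanSpace ℝ (Fin N) → ℝ)
    (x : EuclideanSpace ℝ (Fin N)) : ℝ :=
  ∑ i : Fin N, secondDeriv f x (EuclideanSpace.single i 1)

/-- Pointwise Laplacian on the product `ℝ^{N₁} × ℝ^{N₂}`. -/
noncomputable def lapProd {N₁ N₂ : ℕ}
    (f : EuclideanSpace ℝ (Fin N₁) × EuclideanSpace ℝ (Fin N₂) → ℝ)
    (x : EuclideanSpace ℝ (Fin N₁) × EuclideanSpace ℝ (Fin N₂)) : ℝ :=
  (∑ i : Fin N₁, secondDeriv f x (EuclideanSpace.single i 1, 0)) +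
  (∑ j : Fin N₂, secondDeriv f x (0, EuclideanSpace.single j 1))

section Aux
variable {E F : Type*} [NormedAddCommGroup E] [NormedSpace ℝ E]
  [NormedAddCommGroup F] [NormedSpace ℝ F]

lemma fderiv_mul_fst_snd (u : E → ℝ) (w : F → ℝ) (hu : ContDiff ℝ 2 u)
    (hw : ContDiff ℝ 2 w) (y : E × F) (v : E) (z : F) :
    fderiv ℝ (fun q : E × F => u q.1 * w q.2) y (v, z)
      = w y.2 * fderiv ℝ u y.1 v + u y.1 * fderiv ℝ w y.2 z := by
  have h1 : HasFDerivAt (fun q : E × F => u q.1)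
      ((fderiv ℝ u y.1).comp (ContinuousLinearMap.fst ℝ E F)) y :=
    ((hu.differentiable (by norm_num) y.1).hasFDerivAt).comp y (hasFDerivAt_fst)
  have h2 : HasFDerivAt (fun q : E × F => w q.2)
      ((fderiv ℝ w y.2).comp (ContinuousLinearMap.snd ℝ E F)) y :=
    ((hw.differentiable (by norm_num) y.2).hasFDerivAt).comp y (hasFDerivAt_snd)
  have := (h1.mul h2).fderiv
  rw [show (fun q : E × F => u q.1 * w q.2) = ((fun q : E × F => u q.1) * fun q => w q.2) from rfl, this]
  simp
  ring

lemma secondDeriv_mul_fst (u : E → ℝ) (w : F → ℝ) (hu : ContDiff ℝ 2 u)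
    (hw : ContDiff ℝ 2 w) (p : E × F) (v : E) :
    secondDeriv (fun q : E × F => u q.1 * w q.2) p (v, 0)
      = w p.2 * secondDeriv u p.1 v := by
  have hg : ContDiff ℝ 1 (fun x : E => fderiv ℝ u x v) := by
    exact (ContinuousLinearMap.apply ℝ ℝ v).contDiff.comp
      (hu.fderiv_right (m := 1) (by norm_num))
  have hgd : Differentiable ℝ (fun x : E => fderiv ℝ u x v) :=
    hg.differentiable one_ne_zero
  have heq : (fun y : E × F => fderiv ℝ (fun q : E × F => u q.1 * w q.2) y (v, 0))
      = fun y : E × F => w y.2 * fderiv ℝ u y.1 v := by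
    funext y
    rw [fderiv_mul_fst_snd u w hu hw y v 0]
    simp
  unfold secondDeriv
  rw [heq]
  -- now derivative of y ↦ w y.2 * g y.1
  have h1 : HasFDerivAt (fun y : E × F => fderiv ℝ u y.1 v)
      ((fderiv ℝ (fun x : E => fderiv ℝ u x v) p.1).comp (ContinuousLinearMap.fst ℝ E F)) p :=
    (hgd p.1).hasFDerivAt.comp p (hasFDerivAt_fst)
  have h2 : HasFDerivAt (fun y : E × F => w y.2)
      ((fderiv ℝ w p.2).comp (ContinuousLinearMap.snd ℝ E F)) p :=
    ((hw.differentiable (by norm_num) p.2).hasFDerivAt).comp p (hasFDerivAt_snd)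
  have := (h2.mul h1).fderiv
  rw [show (fun y : E × F => w y.2 * fderiv ℝ u y.1 v) = ((fun y : E × F => w y.2) * fun y => fderiv ℝ u y.1 v) from rfl, this]
  simp

lemma secondDeriv_mul_snd (u : E → ℝ) (w : F → ℝ) (hu : ContDiff ℝ 2 u)
    (hw : ContDiff ℝ 2 w) (p : E × F) (z : F) :
    secondDeriv (fun q : E × F => u q.1 * w q.2) p (0, z)
      = u p.1 * secondDeriv w p.2 z := by
  have hg : ContDiff ℝ 1 (fun x : F => fderiv ℝ w x z) := by
    exact (ContinuousLinearMap.apply ℝ ℝ z).contDiff.comp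
      (hw.fderiv_right (m := 1) (by norm_num))
  have hgd : Differentiable ℝ (fun x : F => fderiv ℝ w x z) :=
    hg.differentiable one_ne_zero
  have heq : (fun y : E × F => fderiv ℝ (fun q : E × F => u q.1 * w q.2) y (0, z))
      = fun y : E × F => u y.1 * fderiv ℝ w y.2 z := by
    funext y
    rw [fderiv_mul_fst_snd u w hu hw y 0 z]
    simp
  unfold secondDeriv
  rw [heq]
  have h1 : HasFDerivAt (fun y : E × F => fderiv ℝ w y.2 z)
      ((fderiv ℝ (fun x : F => fderiv ℝ w x z) p.2).comp (ContinuousLinearMap.snd ℝ E F)) p :=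
    (hgd p.2).hasFDerivAt.comp p (hasFDerivAt_snd)
  have h2 : HasFDerivAt (fun y : E × F => u y.1)
      ((fderiv ℝ u p.1).comp (ContinuousLinearMap.fst ℝ E F)) p :=
    ((hu.differentiable (by norm_num) p.1).hasFDerivAt).comp p (hasFDerivAt_fst)
  have := (h2.mul h1).fderiv
  rw [show (fun y : E × F => u y.1 * fderiv ℝ w y.2 z) = ((fun y : E × F => u y.1) * fun y => fderiv ℝ w y.2 z) from rfl, this]
  simp

end Aux

/-- Tensorization for the logarithmic Schrödinger equation: if `uᵢ` are `C²`
solutions of `-Δu + μᵢu = u·log(u²)` on `ℝ^{Nᵢ}`, then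
`w(x₁,x₂) = u₁(x₁)u₂(x₂)` solves `-Δw + (μ₁+μ₂)w = w·log(w²)` on
`ℝ^{N₁} × ℝ^{N₂}`. -/
theorem stmt_12 {N₁ N₂ : ℕ} (μ₁ μ₂ : ℝ)
    (u₁ : EuclideanSpace ℝ (Fin N₁) → ℝ) (u₂ : EuclideanSpace ℝ (Fin N₂) → ℝ)
    (h₁s : ContDiff ℝ 2 u₁) (h₂s : ContDiff ℝ 2 u₂)
    (h₁ : ∀ x, -lapE u₁ x + μ₁ * u₁ x = u₁ x * Real.log ((u₁ x) ^ 2))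
    (h₂ : ∀ y, -lapE u₂ y + μ₂ * u₂ y = u₂ y * Real.log ((u₂ y) ^ 2)) :
    ∀ p : EuclideanSpace ℝ (Fin N₁) × EuclideanSpace ℝ (Fin N₂),
      -lapProd (fun q => u₁ q.1 * u₂ q.2) p + (μ₁ + μ₂) * (u₁ p.1 * u₂ p.2) =
        (u₁ p.1 * u₂ p.2) * Real.log ((u₁ p.1 * u₂ p.2) ^ 2) := by
  intro p
  have hlap : lapProd (fun q => u₁ q.1 * u₂ q.2) p
      = u₂ p.2 * lapE u₁ p.1 + u₁ p.1 * lapE u₂ p.2 := by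
    unfold lapProd lapE
    rw [Finset.mul_sum, Finset.mul_sum]
    congr 1
    · exact Finset.sum_congr rfl fun i _ =>
        secondDeriv_mul_fst u₁ u₂ h₁s h₂s p (EuclideanSpace.single i 1)
    · exact Finset.sum_congr rfl fun j _ =>
        secondDeriv_mul_snd u₁ u₂ h₁s h₂s p (EuclideanSpace.single j 1)
  set a := u₁ p.1
  set b := u₂ p.2
  have hL₁ : lapE u₁ p.1 = μ₁ * a - a * Real.log (a ^ 2) := by
    have := h₁ p.1; linarith
  have hL₂ : lapE u₂ p.2 = μ₂ * b - b * Real.log (b ^ 2) := by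
    have := h₂ p.2; linarith
  rw [hlap, hL₁, hL₂]
  have hlog : a * b * Real.log ((a * b) ^ 2)
      = a * b * Real.log (a ^ 2) + a * b * Real.log (b ^ 2) := by
    rcases eq_or_ne a 0 with ha | ha
    · simp [ha]
    rcases eq_or_ne b 0 with hb | hb
    · simp [hb]
    rw [mul_pow, Real.log_mul (pow_ne_zero _ ha) (pow_ne_zero _ hb)]
    ring
  rw [hlog]
  ring
end
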